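/- arXiv:0903.0614 — 4 statements merged into one kernel-verified Lean document; each statement's English description precedes it below -/
import Mathlib

section
/- Let 1 ≤ s ≤ n be integers and let A be a fixed n×n real or complex matrix with rows R₁, …, R_n. Let k₁, …, k_s be chosen independently and uniformly at random from {1, …, n}, and let B be the s×n matrix with rows R_{k₁}, …, R_{k_s}. Then E ‖ A*A − (n/s)·B*B ‖_F² ≤ (n/s) · Σ_{k=1}^n |R_k|⁴. -/
open MeasureTheory ProbabilityTheory Matrix

/-- The square of the Frobenius norm of a matrix. -/
noncomputable def frobSq {F : Type*} [RCLike F] {m n : ℕ} (M : Matrix (Fin m) (Fin n) F) : ℝ :=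
  ∑ i, ∑ j, ‖M i j‖ ^ 2

/-!
With `X m := n • (R m)ᴴ (R m)` we have `Aᴴ A = ∑ m (R m)ᴴ (R m)`, so `X k` for a uniform index `k`
is an unbiased estimator of `Aᴴ A`, and `(n / s) • Bᴴ B` is the mean of `s` independent copies of
it. The cross terms of the independent centred samples vanish, so the expected squared error is
`1 / s` times the variance of `X k`, which is at most `E ‖X k‖_F² / s = (n / s) ∑ m |R m|⁴`.
-/

open Finset
open scoped InnerProductSpace

section SamplingWithReplacement

variable {σ α : Type*} [Fintype σ] [DecidableEq σ] [Fintype α]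

theorem sum_fun_comp_eval {M : Type*} [AddCommMonoid M] (t : σ) (g : α → M) :
    ∑ k : σ → α, g (k t) = Fintype.card α ^ (Fintype.card σ - 1) • ∑ a, g a := by
  rw [← (Equiv.funSplitAt t α).symm.sum_comp, Fintype.sum_prod_type]
  simp [Fintype.card_subtype_compl, ← sum_nsmul]

theorem sum_fun_comp_eval_eval_eq_zero {M : Type*} [AddCommMonoid M] {t t' : σ} (h : t ≠ t')
    (f : α → α → M) (hf : ∀ a, ∑ b, f a b = 0) :
    ∑ k : σ → α, f (k t) (k t') = 0 := by
  rw [← (Equiv.funSplitAt t' α).symm.sum_comp, Fintype.sum_prod_type, sum_comm]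
  simp only [Equiv.funSplitAt_symm_apply, dif_neg h]
  simp [hf]

variable {E : Type*} [NormedAddCommGroup E] [InnerProductSpace ℝ E]

theorem sum_fun_norm_sum_comp_sq_of_sum_eq_zero {Y : α → E} (hY : ∑ a, Y a = 0) :
    ∑ k : σ → α, ‖∑ t, Y (k t)‖ ^ 2 =
      Fintype.card σ * Fintype.card α ^ (Fintype.card σ - 1) * ∑ a, ‖Y a‖ ^ 2 := by
  have hpair (t t' : σ) : ∑ k : σ → α, ⟪Y (k t), Y (k t')⟫_ℝ =
      if t = t' then Fintype.card α ^ (Fintype.card σ - 1) * ∑ a, ‖Y a‖ ^ 2 else 0 := by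
    split_ifs with h
    · subst h
      simpa [real_inner_self_eq_norm_sq] using sum_fun_comp_eval (M := ℝ) t fun a => ‖Y a‖ ^ 2
    · refine sum_fun_comp_eval_eval_eq_zero h (fun a b => ⟪Y a, Y b⟫_ℝ) fun a => ?_
      rw [← inner_sum, hY, inner_zero_right]
  calc ∑ k : σ → α, ‖∑ t, Y (k t)‖ ^ 2
      = ∑ t, ∑ t', ∑ k : σ → α, ⟪Y (k t), Y (k t')⟫_ℝ := by
        simp_rw [← real_inner_self_eq_norm_sq, sum_inner, inner_sum]
        rw [sum_comm]
        exact sum_congr rfl fun t _ => sum_comm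
    _ = _ := by simp [hpair, mul_sum, mul_assoc]

theorem sum_norm_sub_sq_le_sum_norm_sq {c : E} {Y : α → E}
    (hY : ∑ a, Y a = Fintype.card α • c) :
    ∑ a, ‖c - Y a‖ ^ 2 ≤ ∑ a, ‖Y a‖ ^ 2 := by
  have hvar : ∑ a, ‖c - Y a‖ ^ 2 = ∑ a, ‖Y a‖ ^ 2 - Fintype.card α * ‖c‖ ^ 2 := by
    simp only [norm_sub_sq_real, sum_add_distrib, sum_sub_distrib, ← mul_sum, ← inner_sum, hY]
    rw [← Nat.cast_smul_eq_nsmul ℝ, real_inner_smul_right, real_inner_self_eq_norm_sq, sum_const,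
      card_univ, nsmul_eq_mul]
    ring
  rw [hvar]
  linarith [mul_nonneg (Fintype.card α).cast_nonneg (sq_nonneg ‖c‖)]

end SamplingWithReplacement

section Frobenius

variable {F : Type*} [RCLike F] {p q : ℕ}

theorem frobSq_smul (r : ℝ) (M : Matrix (Fin p) (Fin q) F) :
    frobSq (r • M) = r ^ 2 * frobSq M := by
  simp [frobSq, mul_sum, norm_smul, mul_pow]

theorem frobSq_vecMulVec (u : Fin p → F) (v : Fin q → F) :
    frobSq (vecMulVec u v) = (∑ i, ‖u i‖ ^ 2) * ∑ j, ‖v j‖ ^ 2 := by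
  simp [frobSq, vecMulVec_apply, norm_mul, mul_pow, sum_mul_sum]

theorem conjTranspose_mul_eq_sum_vecMulVec {m : ℕ} (A B : Matrix (Fin m) (Fin p) F) :
    Aᴴ * B = ∑ i, vecMulVec (star (A i)) (B i) := by
  ext j l
  simp [Matrix.mul_apply, Matrix.sum_apply, vecMulVec_apply]

variable {σ α : Type*} [Fintype σ] [DecidableEq σ] [Fintype α]

theorem sum_fun_frobSq_sum_comp_of_sum_eq_zero {Y : α → Matrix (Fin p) (Fin q) F}
    (hY : ∑ a, Y a = 0) :
    ∑ k : σ → α, frobSq (∑ t, Y (k t)) =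
      Fintype.card σ * Fintype.card α ^ (Fintype.card σ - 1) * ∑ a, frobSq (Y a) := by
  simp only [frobSq, Matrix.sum_apply, ← sum_comm_cycle (u := univ (α := σ → α)),
    ← sum_comm_cycle (u := univ (α := α)), mul_sum]
  refine sum_congr rfl fun i _ => sum_congr rfl fun j _ => ?_
  rw [← mul_sum]
  refine sum_fun_norm_sum_comp_sq_of_sum_eq_zero (σ := σ) (Y := fun a => Y a i j) ?_
  simpa [Matrix.sum_apply] using congr_fun₂ hY i j

theorem sum_frobSq_sub_le_sum_frobSq {C : Matrix (Fin p) (Fin q) F}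
    {Y : α → Matrix (Fin p) (Fin q) F} (hY : ∑ a, Y a = Fintype.card α • C) :
    ∑ a, frobSq (C - Y a) ≤ ∑ a, frobSq (Y a) := by
  simp only [frobSq, Matrix.sub_apply, ← sum_comm_cycle (u := univ (α := α))]
  refine sum_le_sum fun i _ => sum_le_sum fun j _ => ?_
  refine sum_norm_sub_sq_le_sum_norm_sq (Y := fun a => Y a i j) ?_
  simpa [Matrix.sum_apply] using congr_fun₂ hY i j

end Frobenius

theorem random_sampling_rows_general {F : Type*} [RCLike F] (s n : ℕ) (hs : 1 ≤ s)
    (A : Matrix (Fin n) (Fin n) F) :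
    (1 / (n : ℝ) ^ s) * ∑ k : Fin s → Fin n,
        frobSq (Aᴴ * A - ((n : ℝ) / (s : ℝ)) •
          ((Matrix.of fun i j => A (k i) j)ᴴ * (Matrix.of fun i j => A (k i) j))) ≤
      ((n : ℝ) / (s : ℝ)) * ∑ k : Fin n, (∑ j, ‖A k j‖ ^ 2) ^ 2 := by
  set X : Fin n → Matrix (Fin n) (Fin n) F := fun m => (n : ℝ) • vecMulVec (star (A m)) (A m)
  set D : Fin n → Matrix (Fin n) (Fin n) F := fun m => Aᴴ * A - X m
  have hmean : ∑ m, X m = Fintype.card (Fin n) • (Aᴴ * A) := by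
    rw [← smul_sum, conjTranspose_mul_eq_sum_vecMulVec, Fintype.card_fin,
      Nat.cast_smul_eq_nsmul ℝ]
  have hD : ∑ m, D m = 0 := by
    simp [D, sum_sub_distrib, hmean]
  have herror (k : Fin s → Fin n) : Aᴴ * A - ((n : ℝ) / (s : ℝ)) •
      ((Matrix.of fun i j => A (k i) j)ᴴ * (Matrix.of fun i j => A (k i) j)) =
      (s : ℝ)⁻¹ • ∑ t, D (k t) := by
    have hs0 : (s : ℝ) ≠ 0 := Nat.cast_ne_zero.mpr (by omega)
    rw [conjTranspose_mul_eq_sum_vecMulVec (Matrix.of fun i j => A (k i) j), sum_sub_distrib,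
      sum_const, card_univ, Fintype.card_fin, ← smul_sum, smul_sub, ← Nat.cast_smul_eq_nsmul ℝ,
      smul_smul, smul_smul, inv_mul_cancel₀ hs0, one_smul, div_eq_inv_mul]
    rfl
  calc _ = 1 / (n : ℝ) ^ s * ((s : ℝ)⁻¹ ^ 2 * (s * n ^ (s - 1) * ∑ m, frobSq (D m))) := by
        simp_rw [herror, frobSq_smul, ← mul_sum, sum_fun_frobSq_sum_comp_of_sum_eq_zero hD]
        simp
    _ ≤ 1 / (n : ℝ) ^ s * ((s : ℝ)⁻¹ ^ 2 * (s * n ^ (s - 1) * ∑ m, frobSq (X m))) := by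
        gcongr _ * (_ * (_ * ?_))
        exact sum_frobSq_sub_le_sum_frobSq hmean
    _ = _ := by
        obtain rfl | hn := eq_or_ne n 0
        · simp
        have hpow : (n : ℝ) ^ (s - 1) * n = n ^ s := pow_sub_one_mul (by omega) _
        simp only [X, frobSq_smul, frobSq_vecMulVec, Pi.star_apply, norm_star, ← sq, ← mul_sum]
        rw [← hpow]
        field_simp

/-- Random sampling lemma: if `B` is formed by `s` rows of `A` chosen independently and
uniformly at random (with replacement), then
`E ‖A*A − (n/s)·B*B‖_F² ≤ (n/s)·Σ_k |R_k|⁴`.  The expectation over the iid uniform indices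
`k₁,…,k_s` is written as the average over all tuples `k : Fin s → Fin n`. -/
theorem random_sampling_rows {F : Type*} [RCLike F] (s n : ℕ) (hs : 1 ≤ s) (hsn : s ≤ n)
    (A : Matrix (Fin n) (Fin n) F) :
    (1 / (n : ℝ) ^ s) * ∑ k : Fin s → Fin n,
        frobSq (Aᴴ * A - ((n : ℝ) / (s : ℝ)) •
          ((Matrix.of fun i j => A (k i) j)ᴴ * (Matrix.of fun i j => A (k i) j))) ≤
      ((n : ℝ) / (s : ℝ)) * ∑ k : Fin n, (∑ j, ‖A k j‖ ^ 2) ^ 2 :=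
  random_sampling_rows_general s n hs A
end

section
/- There is an absolute constant C > 0 such that the following holds. Let s, n be integers with 1 ≤ s ≤ √n, let A be a row-exchangeable random n×n real or complex matrix with rows R₁, …, R_n, and let B be the s×n matrix formed by the first s rows R₁, …, R_s of A. Then E Σ_{i=1}^n ( σᵢ(A)² − (n/s)·σᵢ(B)² )² ≤ C · (n²/s) · E ( max_{1≤k≤n} |R_k| )⁴, where we set σᵢ(B) := 0 for i > s. -/
/-!
Write `X = AᴴA` and `Y = BᴴB`, so that `σᵢ(A)²` and `σᵢ(B)²` are the decreasingly sorted
eigenvalues of `X` and `Y`. By von Neumann's trace inequality (from Birkhoff's theorem),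
`∑ᵢ (λᵢ(X) - t λᵢ(Y))² ≤ ‖X - tY‖²_F` for `t ≥ 0`. Since `B` consists of rows of `A`,
`X - tY = Aᴴ diag(w) A` with `wₖ = 1 - t` on the sampled rows and `1` elsewhere, whence
`‖X - tY‖²_F = ∑ₖₗ wₖ wₗ |⟨Rₖ, Rₗ⟩|²`. By exchangeability `E |⟨Rₖ, Rₗ⟩|²` takes one value `a`
on the diagonal and one value `b ≥ 0` off it, so for `t = n/s` (where `∑ wₖ = 0`) the expectation
is `(a - b) ∑ wₖ² ≤ (n²/s) a`, and `a = E |R₁|⁴`.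
-/

open MeasureTheory ProbabilityTheory Matrix

/-- The `i+1`-st largest singular value of the matrix `B`: the singular values
(square roots of the eigenvalues of `Bᴴ * B`) listed in decreasing order.  For an `s × n`
matrix with `s ≤ n` this lists `σ₁ ≥ … ≥ σ_s` padded with `n - s` zeros. -/
noncomputable def sVal {F : Type*} [RCLike F] {m n : ℕ} (B : Matrix (Fin m) (Fin n) F)
    (i : Fin n) : ℝ :=
  Real.sqrt ((Matrix.isHermitian_conjTranspose_mul_self B).eigenvalues
    (Tuple.sort (Matrix.isHermitian_conjTranspose_mul_self B).eigenvalues i.rev))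

lemma Matrix.normSq_mem_doublyStochastic {F ι : Type*} [RCLike F] [Fintype ι] [DecidableEq ι]
    {W : Matrix ι ι F} (hW : W ∈ unitaryGroup ι F) :
    of (fun i j => ‖W i j‖ ^ 2) ∈ doublyStochastic ℝ ι := by
  have hdiag : ∀ {M : Matrix ι ι F}, M = 1 → ∀ i, RCLike.re (M i i) = 1 := by
    rintro M rfl i; simp
  rw [mem_doublyStochastic_iff_sum]
  refine ⟨fun i j => by rw [of_apply]; positivity, fun i => ?_, fun j => ?_⟩
  · have := hdiag (mem_unitaryGroup_iff.1 hW) i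
    simp only [mul_apply, star_apply, RCLike.star_def, RCLike.mul_conj, map_sum,
      ← RCLike.ofReal_pow, RCLike.ofReal_re] at this
    simpa using this
  · have := hdiag (mem_unitaryGroup_iff'.1 hW) j
    simp only [mul_apply, star_apply, RCLike.star_def, RCLike.conj_mul, map_sum,
      ← RCLike.ofReal_pow, RCLike.ofReal_re] at this
    simpa using this

namespace Matrix.IsHermitian

variable {F : Type*} [RCLike F] {n : ℕ} {X Y : Matrix (Fin n) (Fin n) F}

noncomputable def sortPerm (hX : X.IsHermitian) : Equiv.Perm (Fin n) :=
  Fin.revPerm.trans (Tuple.sort hX.eigenvalues)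

noncomputable def sortedEigenvalues (hX : X.IsHermitian) (i : Fin n) : ℝ :=
  hX.eigenvalues (hX.sortPerm i)

lemma sortedEigenvalues_antitone (hX : X.IsHermitian) : Antitone hX.sortedEigenvalues :=
  fun _ _ hij => Tuple.monotone_sort hX.eigenvalues (Fin.rev_le_rev.2 hij)

lemma sum_sortedEigenvalues_comp (hX : X.IsHermitian) (g : ℝ → ℝ) :
    ∑ i, g (hX.sortedEigenvalues i) = ∑ i, g (hX.eigenvalues i) :=
  Equiv.sum_comp hX.sortPerm (g ∘ hX.eigenvalues)

lemma re_trace_mul_eq_sum_eigenvalues_mul (hX : X.IsHermitian) (hY : Y.IsHermitian) :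
    RCLike.re (X * Y).trace = ∑ i, ∑ j, hX.eigenvalues i * hY.eigenvalues j *
      ‖(star (hX.eigenvectorUnitary : Matrix (Fin n) (Fin n) F) * hY.eigenvectorUnitary) i j‖ ^ 2 :=
    by
  set U := (hX.eigenvectorUnitary : Matrix (Fin n) (Fin n) F)
  set W := star U * hY.eigenvectorUnitary
  have hXY : (X * Y).trace = (diagonal (RCLike.ofReal ∘ hX.eigenvalues) * W *
      diagonal (RCLike.ofReal ∘ hY.eigenvalues) * star W).trace := by
    conv_lhs => rw [hX.spectral_theorem, hY.spectral_theorem, Unitary.conjStarAlgAut_apply,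
      Unitary.conjStarAlgAut_apply]
    rw [star_mul, star_star]
    simp only [Matrix.mul_assoc]
    rw [trace_mul_comm U]
    simp only [W, U, Matrix.mul_assoc]
  rw [hXY, trace, map_sum]
  refine Finset.sum_congr rfl fun i _ => ?_
  rw [diag_apply, mul_apply, map_sum]
  refine Finset.sum_congr rfl fun j _ => ?_
  simp only [mul_diagonal, diagonal_mul, star_apply, Function.comp_apply, RCLike.star_def]
  rw [show (hX.eigenvalues i : F) * W i j * hY.eigenvalues j * (starRingEnd F) (W i j) =
      ((hX.eigenvalues i * hY.eigenvalues j : ℝ) : F) * (W i j * (starRingEnd F) (W i j)) by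
        push_cast; ring,
    RCLike.mul_conj, ← RCLike.ofReal_pow, ← RCLike.ofReal_mul, RCLike.ofReal_re]

lemma sum_eigenvalues_mul_comp_perm_le (hX : X.IsHermitian) (hY : Y.IsHermitian)
    (σ : Equiv.Perm (Fin n)) :
    ∑ i, hX.eigenvalues i * hY.eigenvalues (σ i) ≤
      ∑ i, hX.sortedEigenvalues i * hY.sortedEigenvalues i := by
  have hreindex : ∑ i, hX.eigenvalues i * hY.eigenvalues (σ i) =
      ∑ i, hX.sortedEigenvalues i *
        hY.sortedEigenvalues ((hX.sortPerm.trans (σ.trans hY.sortPerm.symm)) i) := by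
    rw [← Equiv.sum_comp hX.sortPerm]
    simp [sortedEigenvalues]
  rw [hreindex]
  exact (hX.sortedEigenvalues_antitone.monovary
    hY.sortedEigenvalues_antitone).sum_mul_comp_perm_le_sum_mul

/-- von Neumann's trace inequality, via Birkhoff's theorem applied to the doubly stochastic
matrix `|(U⋆V)ᵢⱼ|²`. -/
lemma re_trace_mul_le_sum_sortedEigenvalues_mul (hX : X.IsHermitian) (hY : Y.IsHermitian) :
    RCLike.re (X * Y).trace ≤ ∑ i, hX.sortedEigenvalues i * hY.sortedEigenvalues i := by
  rw [re_trace_mul_eq_sum_eigenvalues_mul hX hY]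
  set W := star (hX.eigenvectorUnitary : Matrix (Fin n) (Fin n) F) * hY.eigenvectorUnitary
  have hW : W ∈ unitaryGroup (Fin n) F :=
    mul_mem (Unitary.star_mem hX.eigenvectorUnitary.2) hY.eigenvectorUnitary.2
  obtain ⟨c, hc0, hc1, hcW⟩ :=
    exists_eq_sum_perm_of_mem_doublyStochastic (normSq_mem_doublyStochastic hW)
  have hentry : ∀ i j, ‖W i j‖ ^ 2 = ∑ σ : Equiv.Perm (Fin n), c σ * σ.permMatrix ℝ i j := by
    intro i j
    simpa [Matrix.sum_apply] using (congrFun₂ hcW i j).symm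
  calc ∑ i, ∑ j, hX.eigenvalues i * hY.eigenvalues j * ‖W i j‖ ^ 2
      = ∑ σ : Equiv.Perm (Fin n), c σ * ∑ i, hX.eigenvalues i * hY.eigenvalues (σ i) := by
        have hperm : ∀ (σ : Equiv.Perm (Fin n)) i,
            ∑ j, σ.permMatrix ℝ i j * hY.eigenvalues j = hY.eigenvalues (σ i) := fun σ i =>
          congrFun (permMatrix_mulVec (σ := σ)) i
        simp_rw [hentry, ← hperm, Finset.mul_sum]
        conv_rhs => rw [Finset.sum_comm]
        refine Finset.sum_congr rfl fun i _ => ?_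
        rw [Finset.sum_comm]
        exact Finset.sum_congr rfl fun σ _ => Finset.sum_congr rfl fun j _ => by ring
    _ ≤ ∑ σ : Equiv.Perm (Fin n), c σ * ∑ i, hX.sortedEigenvalues i * hY.sortedEigenvalues i :=
        Finset.sum_le_sum fun σ _ =>
          mul_le_mul_of_nonneg_left (sum_eigenvalues_mul_comp_perm_le hX hY σ) (hc0 σ)
    _ = ∑ i, hX.sortedEigenvalues i * hY.sortedEigenvalues i := by
        rw [← Finset.sum_mul, hc1, one_mul]

lemma re_trace_mul_self (hX : X.IsHermitian) :
    RCLike.re (X * X).trace = ∑ i, hX.sortedEigenvalues i ^ 2 := by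
  rw [re_trace_mul_eq_sum_eigenvalues_mul hX hX, UnitaryGroup.star_mul_self,
    sum_sortedEigenvalues_comp hX (· ^ 2)]
  refine Finset.sum_congr rfl fun i _ => ?_
  rw [Finset.sum_eq_single i (fun j _ hji => by simp [one_apply_ne' hji]) (by simp)]
  simp [sq]

/-- A Hoffman–Wielandt type inequality. -/
lemma sum_sq_sub_smul_sortedEigenvalues_le (hX : X.IsHermitian) (hY : Y.IsHermitian)
    {t : ℝ} (ht : 0 ≤ t) :
    ∑ i, (hX.sortedEigenvalues i - t * hY.sortedEigenvalues i) ^ 2 ≤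
      RCLike.re ((X - t • Y) * (X - t • Y)).trace := by
  have hexpand : RCLike.re ((X - t • Y) * (X - t • Y)).trace =
      RCLike.re (X * X).trace - 2 * t * RCLike.re (X * Y).trace +
        t ^ 2 * RCLike.re (Y * Y).trace := by
    simp only [sub_mul, mul_sub, smul_mul_assoc, mul_smul_comm, trace_sub, trace_smul,
      map_sub, RCLike.smul_re, trace_mul_comm Y X]
    ring
  have hsum : ∑ i, (hX.sortedEigenvalues i - t * hY.sortedEigenvalues i) ^ 2 =
      ∑ i, hX.sortedEigenvalues i ^ 2 - 2 * t * ∑ i, hX.sortedEigenvalues i * hY.sortedEigenvalues i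
        + t ^ 2 * ∑ i, hY.sortedEigenvalues i ^ 2 := by
    simp only [Finset.mul_sum, ← Finset.sum_sub_distrib, ← Finset.sum_add_distrib]
    exact Finset.sum_congr rfl fun i _ => by ring
  rw [hsum, hexpand, re_trace_mul_self hX, re_trace_mul_self hY]
  nlinarith [re_trace_mul_le_sum_sortedEigenvalues_mul hX hY]

end Matrix.IsHermitian

def sampleWeight {ι : Type*} [DecidableEq ι] (T : Finset ι) (t : ℝ) (k : ι) : ℝ :=
  if k ∈ T then 1 - t else 1

section SampleWeight

variable {ι : Type*} [Fintype ι] [DecidableEq ι] {T : Finset ι} {t : ℝ}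

lemma sum_sampleWeight_pow (T : Finset ι) (t : ℝ) (p : ℕ) :
    ∑ k, sampleWeight T t k ^ p = T.card * (1 - t) ^ p + (Fintype.card ι - T.card) := by
  simp only [sampleWeight, apply_ite (· ^ p), one_pow, Finset.sum_ite, Finset.sum_const,
    nsmul_eq_mul, mul_one]
  rw [Finset.filter_mem_eq_inter, Finset.univ_inter, Finset.filter_not, Finset.filter_mem_eq_inter,
    Finset.univ_inter, Finset.card_sdiff_of_subset (Finset.subset_univ T), Finset.card_univ,
    Nat.cast_sub (Finset.card_le_univ T)]

lemma sum_sampleWeight_eq_zero (ht : t * T.card = Fintype.card ι) :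
    ∑ k, sampleWeight T t k = 0 := by
  have h := sum_sampleWeight_pow T t 1
  simp only [pow_one] at h
  rw [h]
  linarith

lemma sum_sampleWeight_sq_le (ht : t * T.card = Fintype.card ι) :
    ∑ k, sampleWeight T t k ^ 2 ≤ t * Fintype.card ι := by
  rw [sum_sampleWeight_pow, ← ht]
  nlinarith [(Nat.cast_nonneg T.card : (0 : ℝ) ≤ T.card)]

end SampleWeight

namespace Matrix

variable {F m n : Type*} [RCLike F] [Fintype m] [DecidableEq m]

lemma re_trace_sq_conjTranspose_mul_diagonal_mul [Fintype n] (A : Matrix m n F) (w : m → ℝ) :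
    RCLike.re ((Aᴴ * diagonal (fun k => (w k : F)) * A) *
        (Aᴴ * diagonal (fun k => (w k : F)) * A)).trace =
      ∑ k, ∑ l, w k * w l * ‖A k ⬝ᵥ star (A l)‖ ^ 2 := by
  set G := A * Aᴴ
  set D := diagonal (fun k => (w k : F))
  have htrace : (Aᴴ * D * A * (Aᴴ * D * A)).trace = (D * G * D * G).trace := by
    simp only [G, Matrix.mul_assoc]
    rw [trace_mul_comm Aᴴ]
    simp only [Matrix.mul_assoc]
  rw [htrace, trace, map_sum]
  refine Finset.sum_congr rfl fun k _ => ?_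
  rw [diag_apply, mul_apply, map_sum]
  refine Finset.sum_congr rfl fun l _ => ?_
  have hG : G l k = star (G k l) := by
    rw [← conjTranspose_apply, conjTranspose_mul, conjTranspose_conjTranspose]
  simp only [D, mul_diagonal, diagonal_mul, hG, RCLike.star_def]
  rw [show (w k : F) * G k l * w l * (starRingEnd F) (G k l) =
      ((w k * w l : ℝ) : F) * (G k l * (starRingEnd F) (G k l)) by push_cast; ring,
    RCLike.mul_conj, ← RCLike.ofReal_pow, ← RCLike.ofReal_mul, RCLike.ofReal_re]
  rfl

lemma conjTranspose_submatrix_mul_submatrix {s : Type*} [Fintype s] (A : Matrix m n F)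
    (e : s ↪ m) :
    (A.submatrix e id)ᴴ * A.submatrix e id =
      Aᴴ * diagonal (fun k => if k ∈ Finset.univ.map e then (1 : F) else 0) * A := by
  ext i j
  simp only [mul_apply, conjTranspose_apply, submatrix_apply, id, diagonal_apply, mul_ite, mul_one,
    mul_zero, Finset.sum_ite_eq', Finset.mem_univ, if_true, ite_mul, zero_mul]
  rw [Finset.sum_ite_mem, Finset.univ_inter, Finset.sum_map]

lemma conjTranspose_mul_self_sub_smul_submatrix {s : Type*} [Fintype s] (A : Matrix m n F)
    (e : s ↪ m) (t : ℝ) :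
    Aᴴ * A - t • ((A.submatrix e id)ᴴ * A.submatrix e id) =
      Aᴴ * diagonal (fun k => (sampleWeight (Finset.univ.map e) t k : F)) * A := by
  have hweight : diagonal (fun k => (sampleWeight (Finset.univ.map e) t k : F)) =
      1 - t • diagonal (fun k => if k ∈ Finset.univ.map e then (1 : F) else 0) := by
    ext k l
    by_cases hkl : k = l
    · subst hkl
      simp only [diagonal_apply_eq, sub_apply, one_apply_eq, smul_apply, sampleWeight]
      split_ifs <;> simp [Algebra.algebraMap_eq_smul_one, sub_smul]
    · simp [hkl]
  rw [conjTranspose_submatrix_mul_submatrix, hweight, Matrix.mul_sub, Matrix.sub_mul,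
    Matrix.mul_one, Matrix.mul_smul, Matrix.smul_mul]

end Matrix

section SingularValues

variable {F : Type*} [RCLike F] {m n : ℕ}

open scoped ComplexOrder in
lemma sVal_sq (B : Matrix (Fin m) (Fin n) F) (i : Fin n) :
    sVal B i ^ 2 = (isHermitian_conjTranspose_mul_self B).sortedEigenvalues i :=
  Real.sq_sqrt ((posSemidef_conjTranspose_mul_self B).eigenvalues_nonneg _)

lemma sum_sq_sub_smul_sVal_sq_le {s : ℕ} (A : Matrix (Fin m) (Fin n) F) (e : Fin s ↪ Fin m)
    {t : ℝ} (ht : 0 ≤ t) :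
    ∑ i, (sVal A i ^ 2 - t * sVal (A.submatrix e id) i ^ 2) ^ 2 ≤
      ∑ k, ∑ l, sampleWeight (Finset.univ.map e) t k * sampleWeight (Finset.univ.map e) t l *
        ‖A k ⬝ᵥ star (A l)‖ ^ 2 := by
  simp only [sVal_sq]
  refine (IsHermitian.sum_sq_sub_smul_sortedEigenvalues_le _ _ ht).trans_eq ?_
  rw [conjTranspose_mul_self_sub_smul_submatrix, re_trace_sq_conjTranspose_mul_diagonal_mul]

end SingularValues

section PairFunction

variable {ι : Type*} [Fintype ι] [DecidableEq ι] {f : ι → ι → ℝ}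

lemma exists_eq_ite_of_perm_invariant (hf : ∀ (σ : Equiv.Perm ι) k l, f (σ k) (σ l) = f k l)
    (hf0 : ∀ k l, 0 ≤ f k l) (k₀ : ι) :
    ∃ b, 0 ≤ b ∧ ∀ k l, f k l = if k = l then f k₀ k₀ else b := by
  have hoff : ∀ k l k' l', k ≠ l → k' ≠ l' → f k l = f k' l' := by
    intro k l k' l' hkl hkl'
    -- `swap (σ l) l' * σ` sends `k ↦ k'` and `l ↦ l'`
    set σ := Equiv.swap k k'
    have hσl : σ l ≠ k' := fun h =>
      hkl (σ.injective (h.trans (Equiv.swap_apply_left k k').symm)).symm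
    rw [← hf (Equiv.swap (σ l) l' * σ)]
    simp only [Equiv.Perm.mul_apply, Equiv.swap_apply_left, σ]
    rw [Equiv.swap_apply_of_ne_of_ne hσl.symm hkl']
  by_cases hpair : ∃ k l : ι, k ≠ l
  · obtain ⟨k₁, l₁, h₁⟩ := hpair
    refine ⟨f k₁ l₁, hf0 k₁ l₁, fun k l => ?_⟩
    split_ifs with hkl
    · subst hkl
      simpa using hf (Equiv.swap k₀ k) k₀ k₀
    · exact hoff k l k₁ l₁ hkl h₁
  · push Not at hpair
    refine ⟨0, le_rfl, fun k l => ?_⟩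
    obtain rfl := hpair k l
    obtain rfl := hpair k k₀
    simp

lemma sum_sum_mul_mul_ite_eq (w : ι → ℝ) (a b : ℝ) :
    ∑ k, ∑ l, w k * w l * (if k = l then a else b) =
      (a - b) * ∑ k, w k ^ 2 + b * (∑ k, w k) ^ 2 := by
  have hsplit : ∀ k l, w k * w l * (if k = l then a else b) =
      b * (w k * w l) + if k = l then (a - b) * w k ^ 2 else 0 := by
    intro k l
    split_ifs with h
    · subst h; ring
    · ring
  simp only [hsplit, Finset.sum_add_distrib, Finset.sum_ite_eq, Finset.mem_univ, if_true,
    ← Finset.mul_sum, Finset.sum_mul_sum, sq]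
  ring

end PairFunction

section Exchangeable

variable {Ω ι E : Type*} [MeasurableSpace Ω] [MeasurableSpace E] {P : Measure Ω}
  {A : Ω → ι → E}

lemma integral_comp_perm_eq (hA : Measurable A) (σ : Equiv.Perm ι)
    (hexch : P.map (fun ω i => A ω (σ i)) = P.map A) {Φ : (ι → E) → ℝ} (hΦ : Measurable Φ) :
    ∫ ω, Φ (fun i => A ω (σ i)) ∂P = ∫ ω, Φ (A ω) ∂P := by
  have hAσ : Measurable fun ω i => A ω (σ i) :=
    measurable_pi_lambda _ fun i => (measurable_pi_apply (σ i)).comp hA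
  rw [← integral_map hAσ.aemeasurable hΦ.aestronglyMeasurable, hexch,
    integral_map hA.aemeasurable hΦ.aestronglyMeasurable]

variable [Fintype ι] [DecidableEq ι]

lemma integral_sum_sum_mul_mul_le (hA : Measurable A)
    (hexch : ∀ σ : Equiv.Perm ι, P.map (fun ω i => A ω (σ i)) = P.map A)
    {g : E → E → ℝ} (hg : Measurable (Function.uncurry g)) (hg0 : ∀ x y, 0 ≤ g x y)
    (hint : ∀ k l, Integrable (fun ω => g (A ω k) (A ω l)) P)
    {w : ι → ℝ} (hw : ∑ k, w k = 0) (k₀ : ι) :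
    ∫ ω, ∑ k, ∑ l, w k * w l * g (A ω k) (A ω l) ∂P ≤
      (∑ k, w k ^ 2) * ∫ ω, g (A ω k₀) (A ω k₀) ∂P := by
  set I : ι → ι → ℝ := fun k l => ∫ ω, g (A ω k) (A ω l) ∂P
  have hI : ∀ (σ : Equiv.Perm ι) k l, I (σ k) (σ l) = I k l := fun σ k l =>
    have hΦ : Measurable fun M : ι → E => g (M k) (M l) :=
      hg.comp (f := fun M : ι → E => (M k, M l))
        ((measurable_pi_apply k).prodMk (measurable_pi_apply l))
    integral_comp_perm_eq hA σ (hexch σ) hΦ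
  obtain ⟨b, hb0, hIb⟩ :=
    exists_eq_ite_of_perm_invariant hI (fun k l => integral_nonneg fun ω => hg0 _ _) k₀
  have hsum : ∫ ω, ∑ k, ∑ l, w k * w l * g (A ω k) (A ω l) ∂P = ∑ k, ∑ l, w k * w l * I k l := by
    rw [integral_finsetSum _ fun k _ => integrable_finsetSum _ fun l _ => (hint k l).const_mul _]
    refine Finset.sum_congr rfl fun k _ => ?_
    rw [integral_finsetSum _ fun l _ => (hint k l).const_mul _]
    exact Finset.sum_congr rfl fun l _ => integral_const_mul _ _
  have hite : ∑ k, ∑ l, w k * w l * I k l =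
      ∑ k, ∑ l, w k * w l * (if k = l then I k₀ k₀ else b) :=
    Finset.sum_congr rfl fun k _ => Finset.sum_congr rfl fun l _ => by rw [← hIb]
  rw [hsum, hite, sum_sum_mul_mul_ite_eq, hw]
  nlinarith [Finset.sum_nonneg fun k (_ : k ∈ Finset.univ) => sq_nonneg (w k)]

end Exchangeable

noncomputable def maxRowNorm {F ι κ : Type*} [RCLike F] [Fintype κ] (M : ι → κ → F) : ℝ :=
  ⨆ k, √(∑ j, ‖M k j‖ ^ 2)

section RowNorm

variable {F ι κ : Type*} [RCLike F] [Fintype κ]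

lemma norm_dotProduct_star_sq_le (x y : κ → F) :
    ‖x ⬝ᵥ star y‖ ^ 2 ≤ (∑ p, ‖x p‖ ^ 2) * ∑ p, ‖y p‖ ^ 2 :=
  calc ‖x ⬝ᵥ star y‖ ^ 2 ≤ (∑ p, ‖x p‖ * ‖y p‖) ^ 2 := by
        gcongr
        refine (norm_sum_le _ _).trans_eq (Finset.sum_congr rfl fun p _ => ?_)
        rw [Pi.star_apply, norm_mul, norm_star]
    _ ≤ (∑ p, ‖x p‖ ^ 2) * ∑ p, ‖y p‖ ^ 2 := Finset.sum_mul_sq_le_sq_mul_sq _ _ _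

lemma sum_norm_sq_le_maxRowNorm_sq [Finite ι] (M : ι → κ → F) (k : ι) :
    ∑ j, ‖M k j‖ ^ 2 ≤ maxRowNorm M ^ 2 := by
  rw [← Real.sq_sqrt (by positivity : 0 ≤ ∑ j, ‖M k j‖ ^ 2)]
  exact pow_le_pow_left₀ (Real.sqrt_nonneg _)
    (le_ciSup (f := fun k => √(∑ j, ‖M k j‖ ^ 2)) (Set.finite_range _).bddAbove k) 2

lemma norm_dotProduct_star_sq_le_maxRowNorm [Finite ι] (M : ι → κ → F) (k l : ι) :
    ‖M k ⬝ᵥ star (M l)‖ ^ 2 ≤ maxRowNorm M ^ 4 :=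
  calc ‖M k ⬝ᵥ star (M l)‖ ^ 2 ≤ (∑ p, ‖M k p‖ ^ 2) * ∑ p, ‖M l p‖ ^ 2 :=
        norm_dotProduct_star_sq_le _ _
    _ ≤ maxRowNorm M ^ 2 * maxRowNorm M ^ 2 := by
        gcongr
        · exact sum_norm_sq_le_maxRowNorm_sq M k
        · exact sum_norm_sq_le_maxRowNorm_sq M l
    _ = maxRowNorm M ^ 4 := by ring

variable [MeasurableSpace F] [BorelSpace F] {Ω : Type*} [MeasurableSpace Ω]

lemma Measurable.maxRowNorm [Countable ι] {A : Ω → ι → κ → F} (hA : Measurable A) :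
    Measurable fun ω => maxRowNorm (A ω) :=
  Measurable.iSup fun k => (Finset.measurable_sum _ fun j _ =>
    ((measurable_pi_apply j).comp ((measurable_pi_apply k).comp hA)).norm.pow_const 2).sqrt

end RowNorm

section RandomMatrix

variable {F ι κ Ω : Type*} [RCLike F] [MeasurableSpace F] [BorelSpace F] [Fintype ι] [Fintype κ]
  [MeasurableSpace Ω] {P : Measure Ω} {A : Ω → ι → κ → F}

lemma measurable_norm_dotProduct_star_sq :
    Measurable (Function.uncurry fun x y : κ → F => ‖x ⬝ᵥ star y‖ ^ 2) :=
  Continuous.measurable (by fun_prop)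

lemma integrable_norm_dotProduct_star_sq (hA : Measurable A)
    (hmax : Integrable (fun ω => maxRowNorm (A ω) ^ 4) P) (k l : ι) :
    Integrable (fun ω => ‖A ω k ⬝ᵥ star (A ω l)‖ ^ 2) P := by
  have hmeas : Measurable fun ω => ‖A ω k ⬝ᵥ star (A ω l)‖ ^ 2 :=
    measurable_norm_dotProduct_star_sq.comp (f := fun ω => (A ω k, A ω l))
      (((measurable_pi_apply k).comp hA).prodMk ((measurable_pi_apply l).comp hA))
  refine hmax.mono' hmeas.aestronglyMeasurable (ae_of_all _ fun ω => ?_)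
  rw [Real.norm_of_nonneg (sq_nonneg _)]
  exact norm_dotProduct_star_sq_le_maxRowNorm (A ω) k l

lemma integral_sum_sum_mul_mul_norm_dotProduct_star_sq_le [DecidableEq ι] [Nonempty ι]
    (hA : Measurable A) (hexch : ∀ σ : Equiv.Perm ι, P.map (fun ω i => A ω (σ i)) = P.map A)
    (hmax : Integrable (fun ω => maxRowNorm (A ω) ^ 4) P) {w : ι → ℝ} (hw : ∑ k, w k = 0) :
    ∫ ω, ∑ k, ∑ l, w k * w l * ‖A ω k ⬝ᵥ star (A ω l)‖ ^ 2 ∂P ≤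
      (∑ k, w k ^ 2) * ∫ ω, maxRowNorm (A ω) ^ 4 ∂P := by
  let k₀ := Classical.arbitrary ι
  calc _ ≤ (∑ k, w k ^ 2) * ∫ ω, ‖A ω k₀ ⬝ᵥ star (A ω k₀)‖ ^ 2 ∂P :=
        integral_sum_sum_mul_mul_le hA hexch measurable_norm_dotProduct_star_sq
          (fun _ _ => sq_nonneg _) (integrable_norm_dotProduct_star_sq hA hmax) hw k₀
    _ ≤ (∑ k, w k ^ 2) * ∫ ω, maxRowNorm (A ω) ^ 4 ∂P :=
        mul_le_mul_of_nonneg_left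
          (integral_mono (integrable_norm_dotProduct_star_sq hA hmax k₀ k₀) hmax
            fun ω => norm_dotProduct_star_sq_le_maxRowNorm (A ω) k₀ k₀)
          (Finset.sum_nonneg fun k _ => sq_nonneg (w k))

end RandomMatrix

lemma lintegral_ofReal_le_mul_of_integral_le {Ω : Type*} [MeasurableSpace Ω] {P : Measure Ω}
    {f h m : Ω → ℝ} {c : ℝ} (hf0 : ∀ ω, 0 ≤ f ω) (hfh : ∀ ω, f ω ≤ h ω) (hh : Integrable h P)
    (hm : Integrable m P) (hm0 : ∀ ω, 0 ≤ m ω) (hc : 0 ≤ c)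
    (hle : ∫ ω, h ω ∂P ≤ c * ∫ ω, m ω ∂P) :
    ∫⁻ ω, ENNReal.ofReal (f ω) ∂P ≤ ENNReal.ofReal c * ∫⁻ ω, ENNReal.ofReal (m ω) ∂P :=
  calc ∫⁻ ω, ENNReal.ofReal (f ω) ∂P ≤ ∫⁻ ω, ENNReal.ofReal (h ω) ∂P :=
        lintegral_mono fun ω => ENNReal.ofReal_le_ofReal (hfh ω)
    _ = ENNReal.ofReal (∫ ω, h ω ∂P) :=
        (ofReal_integral_eq_lintegral_ofReal hh (ae_of_all _ fun ω => (hf0 ω).trans (hfh ω))).symm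
    _ ≤ ENNReal.ofReal (c * ∫ ω, m ω ∂P) := ENNReal.ofReal_le_ofReal hle
    _ = ENNReal.ofReal c * ∫⁻ ω, ENNReal.ofReal (m ω) ∂P := by
        rw [ENNReal.ofReal_mul hc, ofReal_integral_eq_lintegral_ofReal hm (ae_of_all _ hm0)]

/-- Sampling of row-exchangeable matrices: for `1 ≤ s ≤ √n` (for integers, `s ≤ √n` is
equivalent to `s * s ≤ n`) and a row-exchangeable random `n × n` matrix `A` with rows
`R₁, …, R_n`, letting `B` be the `s × n` matrix of the first `s` rows,
`E Σᵢ (σᵢ(A)² − (n/s) σᵢ(B)²)² ≤ C (n²/s) E (max_k |R_k|)⁴`, where `σᵢ(B) := 0` for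
`i > s`. -/
theorem sampling_row_exchangeable :
    ∃ C : ℝ, 0 < C ∧
      ∀ (F : Type) (_ : RCLike F) (_ : MeasurableSpace F) (_ : BorelSpace F)
        (s n : ℕ) (hs : 1 ≤ s) (hsn : s * s ≤ n)
        (Ω : Type) (_ : MeasurableSpace Ω) (P : Measure Ω) (_ : IsProbabilityMeasure P)
        (A : Ω → Fin n → Fin n → F),
        Measurable A →
        (∀ σperm : Equiv.Perm (Fin n),
          Measure.map (fun ω i => A ω (σperm i)) P = Measure.map A P) →
        ∫⁻ ω, ENNReal.ofReal (∑ i : Fin n,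
            (sVal (Matrix.of (A ω)) i ^ 2 - ((n : ℝ) / (s : ℝ)) *
              sVal (Matrix.of fun (a : Fin s) (b : Fin n) =>
                A ω (Fin.castLE (by nlinarith) a) b) i ^ 2) ^ 2) ∂P ≤
          ENNReal.ofReal (C * (n : ℝ) ^ 2 / (s : ℝ)) *
            ∫⁻ ω, ENNReal.ofReal ((⨆ k : Fin n, Real.sqrt (∑ j, ‖A ω k j‖ ^ 2)) ^ 4) ∂P := by
  refine ⟨1, one_pos, fun F _ _ _ s n hs hsn Ω _ P _ A hA hexch => ?_⟩
  have hsn' : s ≤ n := by nlinarith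
  have hn : 0 < n := by omega
  have : Nonempty (Fin n) := ⟨⟨0, hn⟩⟩
  set T := Finset.univ.map (Fin.castLEEmb hsn')
  have hT : (n / s : ℝ) * T.card = Fintype.card (Fin n) := by
    simp only [T, Finset.card_map, Finset.card_univ, Fintype.card_fin]
    field_simp
  have hK : 0 < 1 * (n : ℝ) ^ 2 / s := by positivity
  change _ ≤ _ * ∫⁻ ω, ENNReal.ofReal (maxRowNorm (A ω) ^ 4) ∂P
  by_cases htop : ∫⁻ ω, ENNReal.ofReal (maxRowNorm (A ω) ^ 4) ∂P = ⊤
  · rw [htop, ENNReal.mul_top (ENNReal.ofReal_pos.2 hK).ne']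
    exact le_top
  have hmax : Integrable (fun ω => maxRowNorm (A ω) ^ 4) P :=
    ⟨(hA.maxRowNorm.pow_const 4).aestronglyMeasurable,
      (hasFiniteIntegral_iff_ofReal (ae_of_all _ fun ω => by positivity)).2 (Ne.lt_top htop)⟩
  refine lintegral_ofReal_le_mul_of_integral_le (fun ω => by positivity)
    (fun ω => sum_sq_sub_smul_sVal_sq_le (Matrix.of (A ω)) (Fin.castLEEmb hsn') (by positivity))
    (integrable_finsetSum _ fun k _ => integrable_finsetSum _ fun l _ =>
      (integrable_norm_dotProduct_star_sq hA hmax k l).const_mul _)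
    hmax (fun ω => by positivity) hK.le ?_
  calc _ ≤ (∑ k, sampleWeight T (n / s) k ^ 2) * ∫ ω, maxRowNorm (A ω) ^ 4 ∂P :=
        integral_sum_sum_mul_mul_norm_dotProduct_star_sq_le hA hexch hmax
          (sum_sampleWeight_eq_zero hT)
    _ ≤ 1 * (n : ℝ) ^ 2 / s * ∫ ω, maxRowNorm (A ω) ^ 4 ∂P := by
        gcongr
        refine (sum_sampleWeight_sq_le hT).trans_eq ?_
        simp only [Fintype.card_fin]
        ring
end

section
/- Let n ≥ 1, let F be ℝ or ℂ, let A be an n×n invertible F-valued matrix with columns X₁, …, X_n, and for each i let d_i := dist(X_i, V_i) be the Euclidean distance from X_i to the hyperplane V_i spanned by the other n−1 columns. Let 1 ≤ L < j ≤ n, let V_{L,j} be the orthogonal complement of the span of X_{L+1}, …, X_{j−1}, X_{j+1}, …, X_n, and let π_{L,j} : F^n → V_{L,j} be the orthogonal projection onto V_{L,j}. Then d_j ≥ |π_{L,j}(X_j)| / ( 1 + Σ_{i=1}^L |π_{L,j}(X_i)| / d_i ). -/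
/-!
For `w` in the span of the columns other than `X_j`, write `X_j - w = ∑ c_k X_k`, so `c_j = 1`.
The projection `π = π_{L,j}` kills every `X_k` with `k > L`, `k ≠ j`, hence
`π X_j = π (X_j - w) - ∑_{k ≤ L} c_k π X_k`. Since `π` is a contraction and
`|c_k| d_k ≤ |X_j - w|` (because `(X_j - w) / c_k` is `X_k` plus a vector of the span of the
other columns), `|π X_j| ≤ |X_j - w| (1 + ∑_{k ≤ L} |π X_k| / d_k)`; now take the infimum over `w`.
-/

open Matrix

/-- The `j`-th column of `A`, as a vector of `EuclideanSpace F (Fin n)`. -/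
def col {F : Type*} [RCLike F] {n : ℕ} (A : Matrix (Fin n) (Fin n) F) (j : Fin n) :
    EuclideanSpace F (Fin n) := WithLp.toLp 2 (fun k => A k j)

/-- The distance from the `i`-th column of `A` to the hyperplane spanned by the other
columns. -/
noncomputable def dcol {F : Type*} [RCLike F] {n : ℕ} (A : Matrix (Fin n) (Fin n) F)
    (i : Fin n) : ℝ :=
  Metric.infDist (_root_.col A i)
    ((Submodule.span F {x : EuclideanSpace F (Fin n) | ∃ j : Fin n, j ≠ i ∧ x = _root_.col A j}) :
      Set (EuclideanSpace F (Fin n)))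

open Metric Submodule

lemma norm_mul_infDist_le_norm_smul_add {𝕜 E : Type*} [NormedField 𝕜] [SeminormedAddCommGroup E]
    [NormedSpace 𝕜 E] {W : Submodule 𝕜 E} (x : E) (c : 𝕜) {w : E} (hw : w ∈ W) :
    ‖c‖ * infDist x W ≤ ‖c • x + w‖ := by
  rcases eq_or_ne c 0 with rfl | hc
  · simp
  calc ‖c‖ * infDist x W ≤ ‖c‖ * dist x (-(c⁻¹ • w)) := by
        gcongr; exact infDist_le_dist_of_mem (W.neg_mem (W.smul_mem _ hw))
    _ = ‖c • x + w‖ := by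
        rw [dist_eq_norm, sub_neg_eq_add, ← norm_smul, smul_add, smul_inv_smul₀ hc]

namespace Module.Basis

variable {ι 𝕜 E G : Type*}

lemma map_eq_add_sum_of_map_eq_zero {R : Type*} [Semiring R] [AddCommMonoid E] [Module R E]
    [AddCommMonoid G] [Module R G] [Fintype ι] (b : Basis ι R E) {P : E →ₗ[R] G}
    {s : Finset ι} {j : ι} (hj : j ∉ s) (hP : ∀ k ∉ s, k ≠ j → P (b k) = 0) (v : E) :
    P v = b.repr v j • P (b j) + ∑ k ∈ s, b.repr v k • P (b k) := by
  classical
  conv_lhs => rw [← b.sum_repr v]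
  simp only [map_sum, map_smul]
  rw [← Finset.sum_insert hj (f := fun k => b.repr v k • P (b k))]
  refine (Finset.sum_subset (Finset.subset_univ _) fun k _ hk => ?_).symm
  rw [Finset.mem_insert, not_or] at hk
  rw [hP k hk.2 hk.1, smul_zero]

section Seminormed

variable [NormedField 𝕜] [SeminormedAddCommGroup E] [NormedSpace 𝕜 E] (b : Basis ι 𝕜 E)

noncomputable def infDistSpanOthers (i : ι) : ℝ :=
  infDist (b i) (span 𝕜 (b '' {i}ᶜ))

lemma norm_repr_mul_infDistSpanOthers_le (v : E) (i : ι) :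
    ‖b.repr v i‖ * b.infDistSpanOthers i ≤ ‖v‖ := by
  have hw : v - b.repr v i • b i ∈ span 𝕜 (b '' {i}ᶜ) := by
    rw [mem_span_image]
    rintro k hk rfl
    simp at hk
  simpa only [infDistSpanOthers, add_sub_cancel] using
    norm_mul_infDist_le_norm_smul_add (b i) (b.repr v i) hw

end Seminormed

section Normed

variable [NontriviallyNormedField 𝕜] [CompleteSpace 𝕜] [NormedAddCommGroup E] [NormedSpace 𝕜 E]
  (b : Basis ι 𝕜 E)

lemma infDistSpanOthers_pos [Finite ι] (i : ι) : 0 < b.infDistSpanOthers i := by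
  have := b.finiteDimensional_of_finite
  rw [infDistSpanOthers, ← (closed_of_finiteDimensional _).notMem_iff_infDist_pos ⟨0, zero_mem _⟩]
  exact b.linearIndependent.notMem_span_image (Set.notMem_compl_iff.mpr rfl)

lemma norm_repr_le_div_infDistSpanOthers [Finite ι] (v : E) (i : ι) :
    ‖b.repr v i‖ ≤ ‖v‖ / b.infDistSpanOthers i :=
  (le_div_iff₀ (b.infDistSpanOthers_pos i)).2 (b.norm_repr_mul_infDistSpanOthers_le v i)

variable [Fintype ι] [SeminormedAddCommGroup G] [NormedSpace 𝕜 G] {P : E →ₗ[𝕜] G}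
  {s : Finset ι} {j : ι}

lemma norm_map_le_norm_sub_mul (hPnorm : ∀ v, ‖P v‖ ≤ ‖v‖) (hj : j ∉ s)
    (hP : ∀ k ∉ s, k ≠ j → P (b k) = 0) {w : E} (hw : w ∈ span 𝕜 (b '' {j}ᶜ)) :
    ‖P (b j)‖ ≤ ‖b j - w‖ * (1 + ∑ i ∈ s, ‖P (b i)‖ / b.infDistSpanOthers i) := by
  set v := b j - w
  have hvj : b.repr v j = 1 := by
    have hwj : b.repr w j = 0 :=
      Finsupp.notMem_support_iff.1 fun h => (b.mem_span_image.1 hw h) rfl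
    simp [v, hwj]
  have hPv : P v = P (b j) + ∑ k ∈ s, b.repr v k • P (b k) := by
    rw [b.map_eq_add_sum_of_map_eq_zero hj hP, hvj, one_smul]
  calc ‖P (b j)‖ = ‖P v - ∑ k ∈ s, b.repr v k • P (b k)‖ := by rw [hPv, add_sub_cancel_right]
    _ ≤ ‖v‖ + ∑ k ∈ s, ‖b.repr v k‖ * ‖P (b k)‖ := by
        grw [norm_sub_le, norm_sum_le, hPnorm]
        gcongr with k
        exact (_root_.norm_smul _ _).le
    _ ≤ ‖v‖ + ∑ k ∈ s, ‖v‖ / b.infDistSpanOthers k * ‖P (b k)‖ := by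
        gcongr with k
        exact b.norm_repr_le_div_infDistSpanOthers v k
    _ = ‖v‖ * (1 + ∑ i ∈ s, ‖P (b i)‖ / b.infDistSpanOthers i) := by
        rw [mul_add, mul_one, Finset.mul_sum]
        congr 1
        refine Finset.sum_congr rfl fun k _ => ?_
        ring

lemma norm_map_div_le_infDistSpanOthers (hPnorm : ∀ v, ‖P v‖ ≤ ‖v‖) (hj : j ∉ s)
    (hP : ∀ k ∉ s, k ≠ j → P (b k) = 0) :
    ‖P (b j)‖ / (1 + ∑ i ∈ s, ‖P (b i)‖ / b.infDistSpanOthers i) ≤ b.infDistSpanOthers j := by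
  have hpos : 0 < 1 + ∑ i ∈ s, ‖P (b i)‖ / b.infDistSpanOthers i := by
    have := Finset.sum_nonneg fun i (_ : i ∈ s) =>
      div_nonneg (norm_nonneg (P (b i))) (b.infDistSpanOthers_pos i).le
    linarith
  refine (le_infDist ⟨0, zero_mem _⟩).2 fun w hw => ?_
  rw [div_le_iff₀ hpos, dist_eq_norm]
  exact b.norm_map_le_norm_sub_mul hPnorm hj hP hw

end Normed

end Module.Basis

section Matrix

variable {F : Type*} [RCLike F] {n : ℕ} {A : Matrix (Fin n) (Fin n) F}

lemma linearIndependent_col (hA : IsUnit A.det) : LinearIndependent F (_root_.col A) :=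
  (linearIndependent_cols_iff_isUnit.2 ((isUnit_iff_isUnit_det A).2 hA)).map'
    (WithLp.linearEquiv 2 F (Fin n → F)).symm.toLinearMap (LinearEquiv.ker _)

noncomputable def colBasis (hA : IsUnit A.det) :
    Module.Basis (Fin n) F (EuclideanSpace F (Fin n)) :=
  basisOfLinearIndependentOfCardEqFinrank' _ (linearIndependent_col hA) (by simp)

lemma coe_colBasis (hA : IsUnit A.det) : ⇑(colBasis hA) = _root_.col A :=
  coe_basisOfLinearIndependentOfCardEqFinrank' ..

lemma dcol_eq_infDistSpanOthers (hA : IsUnit A.det) (i : Fin n) :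
    dcol A i = (colBasis hA).infDistSpanOthers i := by
  rw [dcol, Module.Basis.infDistSpanOthers, coe_colBasis]
  congr 3
  ext x
  simp [eq_comm]

end Matrix

/-- Columns are indexed from `0`: `V` is spanned by the columns `X_k` with `L ≤ k`, `k ≠ j`, and the
sum runs over `i < L`. -/
theorem correlation_between_distances_general {F : Type*} [RCLike F] (n : ℕ)
    (A : Matrix (Fin n) (Fin n) F) (hA : IsUnit A.det)
    (L : ℕ) (j : Fin n) (hLj : L ≤ (j : ℕ)) :
    let V := (Submodule.span F {x : EuclideanSpace F (Fin n) |
        ∃ k : Fin n, L ≤ (k : ℕ) ∧ k ≠ j ∧ x = _root_.col A k})ᗮ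
    ‖(Submodule.orthogonalProjectionOnto V (_root_.col A j) : EuclideanSpace F (Fin n))‖ /
        (1 + ∑ i ∈ Finset.univ.filter (fun i : Fin n => (i : ℕ) < L),
          ‖(Submodule.orthogonalProjectionOnto V (_root_.col A i) : EuclideanSpace F (Fin n))‖ / dcol A i) ≤
      dcol A j := by
  intro V
  have hj : j ∉ Finset.univ.filter (fun i : Fin n => (i : ℕ) < L) := by simpa using hLj
  have hP : ∀ k ∉ Finset.univ.filter (fun i : Fin n => (i : ℕ) < L), k ≠ j →
      V.orthogonalProjectionOnto (colBasis hA k) = 0 := fun k hk hkj =>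
    orthogonalProjectionOnto_orthogonal_apply_eq_zero
      (subset_span ⟨k, by simpa using hk, hkj, by rw [coe_colBasis]⟩)
  have key := (colBasis hA).norm_map_div_le_infDistSpanOthers
    (P := (V.orthogonalProjectionOnto : EuclideanSpace F (Fin n) →ₗ[F] V))
    V.norm_orthogonalProjectionOnto_apply_le hj hP
  simp only [coe_colBasis, ← dcol_eq_infDistSpanOthers] at key
  exact key

/-- Correlation between distances: with `V_{L,j}` the orthogonal complement of the span of
the columns `X_{L+1}, …, X_n` other than `X_j` (here columns are indexed `0, …, n-1`, so
these are the columns `X_k` with `L ≤ k`, `k ≠ j`) and `π_{L,j}` the orthogonal projection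
onto it, `d_j ≥ |π_{L,j}(X_j)| / (1 + Σ_{i<L} |π_{L,j}(X_i)|/d_i)`. -/
theorem correlation_between_distances {F : Type*} [RCLike F] (n : ℕ)
    (A : Matrix (Fin n) (Fin n) F) (hA : IsUnit A.det)
    (L : ℕ) (hL : 1 ≤ L) (j : Fin n) (hLj : L ≤ (j : ℕ)) :
    let V := (Submodule.span F {x : EuclideanSpace F (Fin n) |
        ∃ k : Fin n, L ≤ (k : ℕ) ∧ k ≠ j ∧ x = _root_.col A k})ᗮ
    ‖(Submodule.orthogonalProjectionOnto V (_root_.col A j) : EuclideanSpace F (Fin n))‖ /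
        (1 + ∑ i ∈ Finset.univ.filter (fun i : Fin n => (i : ℕ) < L),
          ‖(Submodule.orthogonalProjectionOnto V (_root_.col A i) : EuclideanSpace F (Fin n))‖ / dcol A i) ≤
      dcol A j :=
  correlation_between_distances_general n A hA L j hLj
end

section
/- For any two n×n complex self-adjoint matrices M and M', one has Σ_{i=1}^n ( σᵢ(M) − σᵢ(M') )² ≤ ‖M − M'‖_F². As a corollary, for any two n×n complex matrices A and B, one has Σ_{i=1}^n ( σᵢ(A)² − σᵢ(B)² )² ≤ ‖A*A − B*B‖_F². -/
open Matrix

/-!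
Diagonalise `A = U D U*` and `B = V E V*`. Then `‖A - B‖² = ‖A‖² + ‖B‖² - 2 Re tr (A B)` and
`Re tr (A B) = ∑ᵢⱼ |Wᵢⱼ|² λᵢ μⱼ` with `W = U* V` unitary, so that `(|Wᵢⱼ|²)` is doubly stochastic.
Bounding `λᵢ μⱼ` by `|λᵢ| |μⱼ|` and using Birkhoff's theorem together with the rearrangement
inequality gives `Re tr (A B) ≤ ∑ᵢ σᵢ(A) σᵢ(B)`, which is the claim once the square is expanded.
The second statement is the first one for `A* A` and `B* B`, whose singular values are `σᵢ(A)²`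
and `σᵢ(B)²`.
-/

open Finset

theorem Tuple.exists_perm_eq_comp_of_map_univ_eq {α : Type*} [LinearOrder α] {n : ℕ}
    {f g : Fin n → α} (h : univ.val.map f = univ.val.map g) :
    ∃ σ : Equiv.Perm (Fin n), f = g ∘ σ := by
  have hsort : f ∘ sort f = g ∘ sort g := by
    apply List.ofFn_injective
    refine List.Perm.eq_of_sortedLE (List.sortedLE_ofFn_iff.2 (monotone_sort f))
      (List.sortedLE_ofFn_iff.2 (monotone_sort g)) ?_
    refine ((sort f).ofFn_comp_perm f).trans (.trans ?_ ((sort g).ofFn_comp_perm g).symm)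
    rw [← Multiset.coe_eq_coe]
    simpa [List.ofFn_eq_map, ← Multiset.map_coe] using h
  refine ⟨sort g * (sort f)⁻¹, funext fun i => ?_⟩
  simpa using congrFun hsort ((sort f)⁻¹ i)

section DoublyStochastic

variable {R ι : Type*} [Fintype ι] [DecidableEq ι]

lemma submatrix_mem_doublyStochastic [Semiring R] [PartialOrder R] [IsOrderedRing R]
    {S : Matrix ι ι R} (hS : S ∈ doublyStochastic R ι) (σ τ : Equiv.Perm ι) :
    S.submatrix σ τ ∈ doublyStochastic R ι := by
  rw [mem_doublyStochastic_iff_sum] at hS ⊢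
  obtain ⟨hS0, hrow, hcol⟩ := hS
  exact ⟨fun i j => hS0 _ _, fun i => (Equiv.sum_comp τ _).trans (hrow _),
    fun j => (Equiv.sum_comp σ (S · (τ j))).trans (hcol _)⟩

lemma sum_sum_mul_le_of_mem_doublyStochastic [Field R] [LinearOrder R] [IsStrictOrderedRing R]
    {S : Matrix ι ι R} (hS : S ∈ doublyStochastic R ι) {a b : ι → R} (hab : Monovary a b) :
    ∑ i, ∑ j, S i j * (a i * b j) ≤ ∑ i, a i * b i := by
  obtain ⟨w, hw0, hw1, rfl⟩ := exists_eq_sum_perm_of_mem_doublyStochastic hS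
  have hperm (σ : Equiv.Perm ι) :
      ∑ i, ∑ j, σ.permMatrix R i j * (a i * b j) = ∑ i, a i * b (σ i) := by
    simp [Equiv.Perm.permMatrix, PEquiv.toMatrix_apply]
  calc ∑ i, ∑ j, (∑ σ, w σ • σ.permMatrix R : Matrix ι ι R) i j * (a i * b j)
      = ∑ σ, w σ * ∑ i, ∑ j, σ.permMatrix R i j * (a i * b j) := by
        simp only [Matrix.sum_apply, Matrix.smul_apply, smul_eq_mul, sum_mul, mul_sum, mul_assoc]
        exact (sum_congr rfl fun _ _ => Finset.sum_comm).trans Finset.sum_comm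
    _ ≤ ∑ σ, w σ * ∑ i, a i * b i := by
        simp only [hperm]
        exact sum_le_sum fun σ _ =>
          mul_le_mul_of_nonneg_left hab.sum_mul_comp_perm_le_sum_mul (hw0 σ)
    _ = ∑ i, a i * b i := by rw [← sum_mul, hw1, one_mul]

end DoublyStochastic

namespace Matrix

variable {𝕜 : Type*} [RCLike 𝕜] {n : Type*} [Fintype n] [DecidableEq n]

lemma normSq_mem_doublyStochastic_of_mem_unitaryGroup {W : Matrix n n 𝕜}
    (hW : W ∈ unitaryGroup n 𝕜) : (of fun i j => ‖W i j‖ ^ 2) ∈ doublyStochastic ℝ n := by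
  refine mem_doublyStochastic_iff_sum.2 ⟨fun _ _ => sq_nonneg _, fun i => ?_, fun j => ?_⟩
  · have hrow := congrFun₂ (mem_unitaryGroup_iff.1 hW) i i
    simp only [mul_apply, star_apply, RCLike.star_def, RCLike.mul_conj, one_apply_eq] at hrow
    exact_mod_cast hrow
  · have hcol := congrFun₂ (mem_unitaryGroup_iff'.1 hW) j j
    simp only [mul_apply, star_apply, RCLike.star_def, RCLike.conj_mul, one_apply_eq] at hcol
    exact_mod_cast hcol

lemma re_trace_diagonal_mul_mul_diagonal_mul_conjTranspose (d f : n → ℝ) (W : Matrix n n 𝕜) :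
    RCLike.re (diagonal (RCLike.ofReal ∘ d) * W * diagonal (RCLike.ofReal ∘ f) * Wᴴ).trace
      = ∑ i, ∑ j, ‖W i j‖ ^ 2 * (d i * f j) := by
  simp only [trace, Matrix.diag, mul_apply (N := Wᴴ), mul_diagonal, diagonal_mul,
    conjTranspose_apply, map_sum]
  refine sum_congr rfl fun i _ => sum_congr rfl fun j _ => ?_
  rw [← RCLike.ofReal_re (K := 𝕜) (_ * _)]
  congr 1
  push_cast
  rw [← RCLike.mul_conj, RCLike.star_def, Function.comp_apply, Function.comp_apply]
  ring

namespace IsHermitian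

variable {A B : Matrix n n 𝕜}

lemma re_trace_mul_eq (hA : A.IsHermitian) (hB : B.IsHermitian) :
    RCLike.re (A * B).trace = ∑ i, ∑ j,
      ‖(star (hA.eigenvectorUnitary : Matrix n n 𝕜) * hB.eigenvectorUnitary) i j‖ ^ 2
        * (hA.eigenvalues i * hB.eigenvalues j) := by
  set U : Matrix n n 𝕜 := ↑hA.eigenvectorUnitary
  set V : Matrix n n 𝕜 := ↑hB.eigenvectorUnitary
  set D : Matrix n n 𝕜 := diagonal (RCLike.ofReal ∘ hA.eigenvalues)
  set E : Matrix n n 𝕜 := diagonal (RCLike.ofReal ∘ hB.eigenvalues)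
  have hAB : A * B = U * (D * (star U * V) * E * star V) := by
    conv_lhs => rw [hA.spectral_theorem, hB.spectral_theorem]
    simp only [Unitary.conjStarAlgAut_apply, mul_assoc]
    rfl
  have hcycle : D * (star U * V) * E * star V * U = D * (star U * V) * E * (star U * V)ᴴ := by
    simp only [← star_eq_conjTranspose, star_mul, star_star, mul_assoc]
  rw [hAB, trace_mul_comm, hcycle, re_trace_diagonal_mul_mul_diagonal_mul_conjTranspose]

open Polynomial in
lemma map_eigenvalues_conjTranspose_mul_self (hA : A.IsHermitian) :
    univ.val.map (isHermitian_conjTranspose_mul_self A).eigenvalues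
      = univ.val.map (fun i => hA.eigenvalues i ^ 2) := by
  have hcharpoly : (Aᴴ * A).charpoly = ∏ i, (X - C ((hA.eigenvalues i ^ 2 : ℝ) : 𝕜)) := by
    rw [hA.eq, ← sq, ← cfc_pow_id (R := ℝ) A 2 hA.isSelfAdjoint, hA.charpoly_cfc_eq]
  have hroots := (isHermitian_conjTranspose_mul_self A).roots_charpoly_eq_eigenvalues
  rw [hcharpoly, roots_prod _ _ (prod_ne_zero_iff.2 fun i _ => X_sub_C_ne_zero _)] at hroots
  simp only [roots_X_sub_C, Multiset.bind_singleton] at hroots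
  apply Multiset.map_injective (RCLike.ofReal_injective (K := 𝕜))
  simpa [Multiset.map_map, Function.comp_def] using hroots.symm

end IsHermitian

end Matrix

open Matrix

variable {𝕜 : Type*} [RCLike 𝕜] {m n : ℕ}

lemma sq_sVal (B : Matrix (Fin m) (Fin n) 𝕜) (i : Fin n) :
    sVal B i ^ 2 = (isHermitian_conjTranspose_mul_self B).eigenvalues
      (Tuple.sort (isHermitian_conjTranspose_mul_self B).eigenvalues i.rev) :=
  Real.sq_sqrt (eigenvalues_conjTranspose_mul_self_nonneg B _)

lemma antitone_sVal (B : Matrix (Fin m) (Fin n) 𝕜) : Antitone (sVal B) := fun _ _ hij =>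
  Real.sqrt_le_sqrt (Tuple.monotone_sort (isHermitian_conjTranspose_mul_self B).eigenvalues
    (Fin.rev_le_rev.2 hij))

lemma frobSq_eq_re_trace (B : Matrix (Fin m) (Fin n) 𝕜) :
    frobSq B = RCLike.re (Bᴴ * B).trace := by
  simp only [frobSq, trace, Matrix.diag, mul_apply, conjTranspose_apply, RCLike.star_def,
    RCLike.conj_mul, map_sum, ← RCLike.ofReal_pow, RCLike.ofReal_re]
  exact sum_comm

lemma sum_sVal_sq (B : Matrix (Fin m) (Fin n) 𝕜) : ∑ i, sVal B i ^ 2 = frobSq B := by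
  set hB := isHermitian_conjTranspose_mul_self B
  calc ∑ i, sVal B i ^ 2 = ∑ i, hB.eigenvalues i := by
        simp only [sq_sVal]
        exact Equiv.sum_comp (Fin.revPerm.trans (Tuple.sort hB.eigenvalues)) _
    _ = frobSq B := by
        simp [frobSq_eq_re_trace, hB.trace_eq_sum_eigenvalues]

lemma Matrix.IsHermitian.exists_sVal_eq_abs_eigenvalues_comp {A : Matrix (Fin n) (Fin n) 𝕜}
    (hA : A.IsHermitian) :
    ∃ σ : Equiv.Perm (Fin n), sVal A = (fun i => |hA.eigenvalues i|) ∘ σ := by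
  set ν := (isHermitian_conjTranspose_mul_self A).eigenvalues
  obtain ⟨τ, hτ⟩ :=
    Tuple.exists_perm_eq_comp_of_map_univ_eq hA.map_eigenvalues_conjTranspose_mul_self
  refine ⟨(Fin.revPerm.trans (Tuple.sort ν)).trans τ, funext fun i => ?_⟩
  simp [sVal, ν, hτ, Real.sqrt_sq_eq_abs]

lemma sVal_conjTranspose_mul_self (A : Matrix (Fin m) (Fin n) 𝕜) (i : Fin n) :
    sVal (Aᴴ * A) i = sVal A i ^ 2 := by
  set hAA := isHermitian_conjTranspose_mul_self A
  obtain ⟨σ, hσ⟩ := hAA.exists_sVal_eq_abs_eigenvalues_comp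
  have habs : (fun i => |hAA.eigenvalues i|) = hAA.eigenvalues :=
    funext fun i => abs_of_nonneg (eigenvalues_conjTranspose_mul_self_nonneg A i)
  rw [habs] at hσ
  have hsq : (sVal A · ^ 2) = hAA.eigenvalues ∘ (Fin.revPerm.trans (Tuple.sort hAA.eigenvalues)) :=
    funext (sq_sVal A)
  have hanti_sq : Antitone (sVal A · ^ 2) := fun i j hij =>
    pow_le_pow_left₀ (Real.sqrt_nonneg _) (antitone_sVal A hij) 2
  have huniq := Tuple.unique_antitone (hσ ▸ antitone_sVal (Aᴴ * A)) (hsq ▸ hanti_sq)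
  exact congrFun (hσ.trans (huniq.trans hsq.symm)) i

namespace Matrix.IsHermitian

variable {A B : Matrix (Fin n) (Fin n) 𝕜}

lemma re_trace_mul_le_sum_sVal_mul (hA : A.IsHermitian) (hB : B.IsHermitian) :
    RCLike.re (A * B).trace ≤ ∑ i, sVal A i * sVal B i := by
  set W : Matrix (Fin n) (Fin n) 𝕜 :=
    star (hA.eigenvectorUnitary : Matrix (Fin n) (Fin n) 𝕜) * hB.eigenvectorUnitary
  have hW : W ∈ unitaryGroup (Fin n) 𝕜 :=
    mul_mem (Unitary.star_mem hA.eigenvectorUnitary.2) hB.eigenvectorUnitary.2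
  set S : Matrix (Fin n) (Fin n) ℝ := of fun i j => ‖W i j‖ ^ 2
  obtain ⟨σ, hσ⟩ := hA.exists_sVal_eq_abs_eigenvalues_comp
  obtain ⟨τ, hτ⟩ := hB.exists_sVal_eq_abs_eigenvalues_comp
  calc RCLike.re (A * B).trace = ∑ i, ∑ j, S i j * (hA.eigenvalues i * hB.eigenvalues j) :=
        hA.re_trace_mul_eq hB
    _ ≤ ∑ i, ∑ j, S i j * (|hA.eigenvalues i| * |hB.eigenvalues j|) := by
        refine sum_le_sum fun i _ => sum_le_sum fun j _ => ?_
        rw [← abs_mul]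
        exact mul_le_mul_of_nonneg_left (le_abs_self _) (sq_nonneg _)
    _ = ∑ i, ∑ j, S.submatrix σ τ i j * (sVal A i * sVal B j) := by
        rw [← Equiv.sum_comp σ]
        refine sum_congr rfl fun i _ => ?_
        rw [← Equiv.sum_comp τ]
        simp [hσ, hτ]
    _ ≤ ∑ i, sVal A i * sVal B i :=
        sum_sum_mul_le_of_mem_doublyStochastic
          (submatrix_mem_doublyStochastic (normSq_mem_doublyStochastic_of_mem_unitaryGroup hW) σ τ)
          ((antitone_sVal A).monovary (antitone_sVal B))

lemma frobSq_sub (hA : A.IsHermitian) (hB : B.IsHermitian) :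
    frobSq (A - B) = frobSq A + frobSq B - 2 * RCLike.re (A * B).trace := by
  simp only [frobSq_eq_re_trace, conjTranspose_sub, hA.eq, hB.eq, sub_mul, mul_sub,
    trace_sub, map_sub, trace_mul_comm B A]
  ring

theorem sum_sub_sVal_sq_le_frobSq_sub (hA : A.IsHermitian) (hB : B.IsHermitian) :
    ∑ i, (sVal A i - sVal B i) ^ 2 ≤ frobSq (A - B) := by
  have hexpand : ∑ i, (sVal A i - sVal B i) ^ 2
      = ∑ i, sVal A i ^ 2 + ∑ i, sVal B i ^ 2 - 2 * ∑ i, sVal A i * sVal B i := by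
    simp only [sub_sq, sum_add_distrib, sum_sub_distrib, mul_sum, mul_assoc]
    ring
  rw [hexpand, sum_sVal_sq, sum_sVal_sq, hA.frobSq_sub hB]
  linarith [hA.re_trace_mul_le_sum_sVal_mul hB]

end Matrix.IsHermitian

/-- The Hoffman–Wielandt theorem: for self-adjoint `M, M'`,
`Σᵢ (σᵢ(M) − σᵢ(M'))² ≤ ‖M − M'‖_F²`; and as a corollary, for arbitrary `A, B`,
`Σᵢ (σᵢ(A)² − σᵢ(B)²)² ≤ ‖A*A − B*B‖_F²`. -/
theorem hoffman_wielandt :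
    (∀ (n : ℕ) (M M' : Matrix (Fin n) (Fin n) ℂ), M.IsHermitian → M'.IsHermitian →
      ∑ i : Fin n, (sVal M i - sVal M' i) ^ 2 ≤ frobSq (M - M')) ∧
    (∀ (n : ℕ) (A B : Matrix (Fin n) (Fin n) ℂ),
      ∑ i : Fin n, (sVal A i ^ 2 - sVal B i ^ 2) ^ 2 ≤ frobSq (Aᴴ * A - Bᴴ * B)) := by
  refine ⟨fun _ _ _ hM hM' => hM.sum_sub_sVal_sq_le_frobSq_sub hM', fun _ A B => ?_⟩
  simpa only [sVal_conjTranspose_mul_self] using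
    (isHermitian_conjTranspose_mul_self A).sum_sub_sVal_sq_le_frobSq_sub
      (isHermitian_conjTranspose_mul_self B)
end
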